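/- arXiv:1907.02170 — 10 statements merged into one kernel-verified Lean document; each statement's English description precedes it below -/
import Mathlib

section
/- Every structural equation model with a time map (where each f_X depends only on variables of strictly smaller time) has a solution, i.e., there exists v : χ → Σ with f_X(v) = v(X) for all X; moreover this solution is unique. -/
/-- A structural equation model: a family of structural functions `f X`, one per
variable, together with a time map `t`, such that each `f X` depends only on
variables of strictly smaller time. -/
structure SEM (χ : Type) (V : Type) where
  f : χ → (χ → V) → V
  t : χ → ℕ
  dep : ∀ X v v', (∀ X', t X' < t X → v X' = v' X') → f X v = f X v'

/-- `v` is a solution of the SEM `M`. -/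
def SEM.IsSolution {χ V : Type} (M : SEM χ V) (v : χ → V) : Prop :=
  ∀ X, M.f X v = v X

/-- Intervention: a partial function `i : χ → Option V`; variables in its domain
have their structural function replaced by the corresponding constant. -/
def SEM.intervene {χ V : Type} (M : SEM χ V) (i : χ → Option V) : SEM χ V where
  f X v := (i X).getD (M.f X v)
  t := M.t
  dep := fun X v v' h => by cases hi : i X <;> simp [hi, M.dep X v v' h]

/-- Causal influence: `X ⇝ Y` iff there is a context intervention `i` (not setting
`X` or `Y`) and two values for `X` such that the corresponding solutions differ at `Y`. -/
def SEM.Influences {χ V : Type} [DecidableEq χ] (M : SEM χ V) (X Y : χ) : Prop :=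
  X ≠ Y ∧ ∃ (i : χ → Option V) (x₁ x₂ : V) (v₁ v₂ : χ → V),
    i X = none ∧ i Y = none ∧
    (M.intervene (Function.update i X (some x₁))).IsSolution v₁ ∧
    (M.intervene (Function.update i X (some x₂))).IsSolution v₂ ∧
    v₁ Y ≠ v₂ Y

/-- A local SEM: each structural function depends only on the variables of the
immediately preceding time step. -/
def SEM.IsLocal {χ V : Type} (M : SEM χ V) : Prop :=
  ∀ X v v', (∀ X', M.t X' + 1 = M.t X → v X' = v' X') → M.f X v = M.f X v'

/-- Finite dependence: each structural function depends on only finitely many variables. -/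
def SEM.FinDep {χ V : Type} (M : SEM χ V) : Prop :=
  ∀ X, ∃ S : Finset χ, ∀ v v', (∀ Z ∈ S, v Z = v' Z) → M.f X v = M.f X v'

/-- Every SEM with a time map has a solution, and it is unique. -/
theorem sem_existsUnique_solution {χ V : Type} [Nonempty V] (M : SEM χ V) :
    ∃! v : χ → V, M.IsSolution v := by
  classical
  -- iterate the structural functions
  let approx : ℕ → χ → V := fun n =>
    Nat.rec (fun _ => Classical.arbitrary V) (fun _ prev X => M.f X prev) n
  have happrox : ∀ n X, approx (n + 1) X = M.f X (approx n) := fun n X => rfl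
  -- stabilization lemma
  have stab : ∀ n, ∀ X, M.t X ≤ n → approx (n + 1) X = approx (M.t X + 1) X := by
    intro n
    induction n using Nat.strong_induction_on with
    | _ n ih =>
      intro X hX
      rw [happrox, happrox]
      apply M.dep
      intro X' hX'
      have h1 : 1 ≤ n := le_trans (Nat.one_le_iff_ne_zero.mpr (by omega)) hX
      have e1 : approx n X' = approx (M.t X' + 1) X' := by
        have := ih (n - 1) (by omega) X' (by omega)
        simpa [Nat.sub_add_cancel h1] using this
      have e2 : approx (M.t X) X' = approx (M.t X' + 1) X' := by
        have := ih (M.t X - 1) (by omega) X' (by omega)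
        simpa [Nat.sub_add_cancel (show 1 ≤ M.t X by omega)] using this
      rw [e1, e2]
  set v : χ → V := fun X => approx (M.t X + 1) X with hv
  have hsol : M.IsSolution v := by
    intro X
    have : v X = M.f X (approx (M.t X)) := happrox _ X
    rw [this]
    apply M.dep
    intro X' hX'
    show v X' = _
    rw [hv]
    by_cases h0 : M.t X = 0
    · omega
    · have := stab (M.t X - 1) X' (by omega)
      rw [Nat.sub_add_cancel (by omega : 1 ≤ M.t X)] at this
      simp [this]
  refine ⟨v, hsol, ?_⟩
  intro w hw
  funext X
  have key : ∀ n, ∀ X, M.t X ≤ n → w X = v X := by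
    intro n
    induction n using Nat.strong_induction_on with
    | _ n ih =>
      intro X hX
      rw [← hw X, ← hsol X]
      apply M.dep
      intro X' hX'
      exact ih (M.t X') (by omega) X' le_rfl
  exact key (M.t X) X le_rfl
end

section
/- In an SEM with time map t, if X causally influences Y (there is an intervention context i and two values x₁, x₂ for X such that the unique solutions of the model intervened with i together with X := x₁, respectively X := x₂, differ at Y), then t(X) < t(Y). -/
/-- Causal influence respects the time order: `X ⇝ Y` implies `t X < t Y`. -/
theorem influence_respects_time {χ V : Type} [DecidableEq χ] (M : SEM χ V) (X Y : χ)
    (h : M.Influences X Y) : M.t X < M.t Y := by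
  obtain ⟨hXY, i, x₁, x₂, v₁, v₂, hiX, hiY, hs₁, hs₂, hne⟩ := h
  by_contra hlt
  push_neg at hlt
  -- claim: all Z ≠ X with t Z ≤ t X agree
  have key : ∀ n, ∀ Z, M.t Z ≤ M.t X → Z ≠ X → M.t Z ≤ n → v₁ Z = v₂ Z := by
    intro n
    induction n with
    | zero =>
      intro Z hZ hZX hZ0
      have h1 := hs₁ Z
      have h2 := hs₂ Z
      simp only [SEM.intervene, Function.update_of_ne hZX] at h1 h2
      cases hi : i Z with
      | some c => rw [← h1, ← h2, hi]; simp
      | none =>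
        rw [← h1, ← h2, hi]
        simp only [Option.getD_none]
        exact M.dep Z v₁ v₂ (fun X' hX' => absurd hX' (by omega))
    | succ n ih =>
      intro Z hZ hZX hZn
      have h1 := hs₁ Z
      have h2 := hs₂ Z
      simp only [SEM.intervene, Function.update_of_ne hZX] at h1 h2
      cases hi : i Z with
      | some c => rw [← h1, ← h2, hi]; simp
      | none =>
        rw [← h1, ← h2, hi]
        simp only [Option.getD_none]
        refine M.dep Z v₁ v₂ (fun X' hX' => ?_)
        have hX'X : X' ≠ X := by
          rintro rfl; omega
        exact ih X' (by omega) hX'X (by omega)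
  exact hne (key (M.t Y) Y hlt (Ne.symm hXY) le_rfl)
end

section
/- Composition axiom (C) is sound for SEMs: let M be an SEM with time map, i a finite intervention, and let v be the unique solution of i(M). Let i' be any restriction of v to a finite set of variables (i.e., i'(X) = v(X) for all X in dom(i')). Then the unique solution of i'(i(M)) equals v. -/
theorem SEM.solution_unique {χ V : Type} (N : SEM χ V) (w w' : χ → V)
    (hw : N.IsSolution w) (hw' : N.IsSolution w') : w = w' := by
  have key : ∀ n X, N.t X < n → w X = w' X := by
    intro n
    induction n with
    | zero => intro X h; omega
    | succ n ih =>
      intro X h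
      rw [← hw X, ← hw' X]
      exact N.dep X w w' (fun X' hlt => ih X' (by omega))
  funext X
  exact key (N.t X + 1) X (Nat.lt_succ_self _)

/-- Soundness of composition (axiom C): if `v` is the solution of `i(M)`
and `i'` is a finite restriction of `v`, then the unique solution of `i'(i(M))` is `v`. -/
theorem composition_sound {χ V : Type} (M : SEM χ V) (i i' : χ → Option V)
    (hfin : {X | i X ≠ none}.Finite) (hfin' : {X | i' X ≠ none}.Finite)
    (v : χ → V) (hv : (M.intervene i).IsSolution v)
    (hrestr : ∀ X s, i' X = some s → s = v X) :
    ((M.intervene i).intervene i').IsSolution v ∧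
      ∀ w, ((M.intervene i).intervene i').IsSolution w → w = v := by
  have hsol : ((M.intervene i).intervene i').IsSolution v := by
    intro X
    cases h : i' X with
    | none => simp [SEM.intervene, h]; exact hv X
    | some s => simp [SEM.intervene, h]; exact hrestr X s h
  exact ⟨hsol, fun w hw => SEM.solution_unique _ w v hw hsol⟩
end

section
/- The conditional language over infinitely many variables is not compact: with variables X₀, X₁, X₂, …, the set of formulas Ω = { [X_{i+1}]X_i ∧ [¬X_{i+1}]¬X_i : i ∈ ℕ } (asserting that X_{i+1} causally determines X_i for each i) is such that every finite subset of Ω is satisfiable in some SEM with time map, but Ω itself is unsatisfiable. -/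
/-- The single intervention fixing variable `n` to value `b`. -/
def single (n : ℕ) (b : Bool) : ℕ → Option Bool :=
  fun m => if m = n then some b else none

/-- `M` satisfies the formula `[X_{i+1}]X_i ∧ [¬X_{i+1}]¬X_i`: under the intervention
`X_{i+1} := 1` the solution has `X_i = 1`, and under `X_{i+1} := 0` it has `X_i = 0`. -/
def SatChain (M : SEM ℕ Bool) (i : ℕ) : Prop :=
  (∃ v, (M.intervene (single (i+1) true)).IsSolution v ∧ v i = true) ∧
  (∃ v, (M.intervene (single (i+1) false)).IsSolution v ∧ v i = false)

/-- A chain SEM of length `N`: `X_n` copies `X_{n+1}` for `n < N`, constant otherwise. -/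
def chainSEM (N : ℕ) : SEM ℕ Bool where
  f n v := if n < N then v (n+1) else false
  t n := N - n
  dep := by
    intro X v v' h
    by_cases hX : X < N
    · simp only [hX, if_true]
      exact h (X+1) (show N - (X+1) < N - X by omega)
    · simp [hX]

lemma chain_sol (N i : ℕ) (hi : i + 1 < N) (b : Bool) :
    ((chainSEM N).intervene (single (i+1) b)).IsSolution
      (fun n => if n ≤ i+1 then b else false) := by
  intro n
  simp only [SEM.intervene, chainSEM, single]
  by_cases hn : n = i + 1
  · simp [hn]
  · simp only [hn, if_false, Option.getD_none]
    by_cases h1 : n ≤ i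
    · have : n < N := by omega
      simp [this, show n + 1 ≤ i + 1 by omega, show n ≤ i + 1 by omega]
    · have h2 : ¬ n ≤ i + 1 := by omega
      by_cases h3 : n < N <;> simp [h2, h3, show ¬ n + 1 ≤ i + 1 by omega]

/-- Solutions of the two `single k` interventions agree on variables of time ≤ `t k`
(other than `k` itself). -/
lemma agree (M : SEM ℕ Bool) (k : ℕ) (b₁ b₂ : Bool) (v₁ v₂ : ℕ → Bool)
    (h₁ : (M.intervene (single k b₁)).IsSolution v₁)
    (h₂ : (M.intervene (single k b₂)).IsSolution v₂) :
    ∀ n X, M.t X ≤ n → X ≠ k → M.t X ≤ M.t k → v₁ X = v₂ X := by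
  intro n
  induction n using Nat.strong_induction_on with
  | _ n ih =>
    intro X hXn hXk hXt
    have e1 : M.f X v₁ = v₁ X := by
      have := h₁ X
      simpa [SEM.intervene, single, hXk] using this
    have e2 : M.f X v₂ = v₂ X := by
      have := h₂ X
      simpa [SEM.intervene, single, hXk] using this
    rw [← e1, ← e2]
    apply M.dep
    intro X' hX'
    have hX'n : M.t X' < n := lt_of_lt_of_le hX' hXn
    have hX'k : X' ≠ k := by
      intro h; subst h; omega
    exact ih (M.t X') hX'n X' le_rfl hX'k (le_of_lt (lt_of_lt_of_le hX' hXt))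

/-- Non-compactness: every finite subset of
`Ω = {[X_{i+1}]X_i ∧ [¬X_{i+1}]¬X_i : i ∈ ℕ}` is satisfiable in some SEM with time map,
but Ω itself is unsatisfiable. -/
theorem not_compact :
    (∀ S : Finset ℕ, ∃ M : SEM ℕ Bool, ∀ i ∈ S, SatChain M i) ∧
    ¬ ∃ M : SEM ℕ Bool, ∀ i : ℕ, SatChain M i := by
  constructor
  · intro S
    refine ⟨chainSEM (S.sup id + 2), fun i hi => ?_⟩
    have hiN : i + 1 < S.sup id + 2 := by
      have := Finset.le_sup (f := id) hi
      simp at this; omega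
    constructor
    · exact ⟨_, chain_sol _ i hiN true, by simp⟩
    · exact ⟨_, chain_sol _ i hiN false, by simp⟩
  · rintro ⟨M, hM⟩
    have hdec : ∀ i, M.t (i+1) < M.t i := by
      intro i
      by_contra h
      push_neg at h
      obtain ⟨⟨v₁, hs₁, hv₁⟩, ⟨v₂, hs₂, hv₂⟩⟩ := hM i
      have := agree M (i+1) true false v₁ v₂ hs₁ hs₂ (M.t i) i le_rfl (by omega) h
      rw [hv₁, hv₂] at this
      exact Bool.noConfusion this
    have hmon : ∀ n, M.t n + n ≤ M.t 0 := by
      intro n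
      induction n with
      | zero => omega
      | succ n ih => have := hdec n; omega
    have := hmon (M.t 0 + 1)
    omega
end

section
/- Soundness of the recursiveness schema: in any SEM with time map, there is no finite cycle of direct counterfactual dependence. Concretely, if for variables X₁, …, X_k (with X₁ ≠ X_k) and interventions α₁, …, α_{k−1} we have that toggling X_j under α_j changes X_{j+1} in the solution (for each 1 ≤ j < k), then there is no intervention α_k under which toggling X_k changes X₁. -/
/-- `Toggling X under α changes Y`: the solutions of `α(M)` with `X` further set to
`1` resp. `0` differ at `Y`. -/
def Toggles {χ : Type} [DecidableEq χ] (M : SEM χ Bool) (α : χ → Option Bool)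
    (X Y : χ) : Prop :=
  ∃ v₁ v₂ : χ → Bool,
    (M.intervene (Function.update α X (some true))).IsSolution v₁ ∧
    (M.intervene (Function.update α X (some false))).IsSolution v₂ ∧
    v₁ Y ≠ v₂ Y

lemma toggles_time_lt {χ : Type} [DecidableEq χ] (M : SEM χ Bool) (α : χ → Option Bool)
    (X Y : χ) (hXY : X ≠ Y) (h : Toggles M α X Y) : M.t X < M.t Y := by
  obtain ⟨v₁, v₂, h₁, h₂, hne⟩ := h
  by_contra hle
  push_neg at hle
  have H : ∀ n Z, M.t Z = n → Z ≠ X → M.t Z ≤ M.t X → v₁ Z = v₂ Z := by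
    intro n
    induction n using Nat.strong_induction_on with
    | _ n ih =>
      intro Z hZ hZX hZle
      rw [← h₁ Z, ← h₂ Z]
      show (Function.update α X (some true) Z).getD (M.f Z v₁)
          = (Function.update α X (some false) Z).getD (M.f Z v₂)
      rw [Function.update_of_ne hZX, Function.update_of_ne hZX]
      cases hα : α Z with
      | some c => simp [hα]
      | none =>
        simp only [hα, Option.getD_none]
        refine M.dep Z v₁ v₂ (fun Z' hZ' => ?_)
        have hZ'X : Z' ≠ X := by
          intro e; rw [e] at hZ'; omega
        exact ih (M.t Z') (by omega) Z' rfl hZ'X (by omega)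
  exact hne (H (M.t Y) Y rfl (Ne.symm hXY) hle)

lemma toggles_time_le {χ : Type} [DecidableEq χ] (M : SEM χ Bool) (α : χ → Option Bool)
    (X Y : χ) (h : Toggles M α X Y) : M.t X ≤ M.t Y := by
  by_cases hXY : X = Y
  · rw [hXY]
  · exact le_of_lt (toggles_time_lt M α X Y hXY h)

/-- Soundness of recursiveness (Rec): there is no finite cycle of direct
counterfactual dependence.  If toggling `X j` under `α j` changes `X (j+1)` for each
`j < k - 1`, and `X 0 ≠ X (k-1)`, then no intervention `β` is such that toggling
`X (k-1)` under `β` changes `X 0`. -/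
theorem rec_sound {χ : Type} [DecidableEq χ] (M : SEM χ Bool) (k : ℕ) (X : ℕ → χ)
    (α : ℕ → χ → Option Bool) (hne : X 0 ≠ X (k-1))
    (hchain : ∀ j, j + 1 < k → Toggles M (α j) (X j) (X (j+1))) :
    ∀ β : χ → Option Bool, ¬ Toggles M β (X (k-1)) (X 0) := by
  intro β hβ
  -- from hβ and hne we get t (X (k-1)) < t (X 0)
  have hlt := toggles_time_lt M β (X (k-1)) (X 0) (Ne.symm hne) hβ
  -- chain gives t (X 0) ≤ t (X (k-1))
  have hchain' : ∀ j, j ≤ k - 1 → M.t (X 0) ≤ M.t (X j) := by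
    intro j hj
    induction j with
    | zero => exact le_refl _
    | succ n ih =>
      have hn : n ≤ k - 1 := Nat.le_of_succ_le hj
      have hk : n + 1 < k := by omega
      exact le_trans (ih hn) (toggles_time_le M (α n) (X n) (X (n+1)) (hchain n hk))
  exact absurd hlt (not_lt.mpr (hchain' (k-1) le_rfl))
end

section
/- The acyclicity axiom (Rec⁺) is sound: in any SEM M with time map, the causal influence relation ⇝ has no cycles; i.e., if X₁ ⇝ X₂, X₂ ⇝ X₃, …, X_{k−1} ⇝ X_k all hold in M, then X_k ⇝ X₁ does not hold in M. -/
lemma influences_t_lt {χ V : Type} [DecidableEq χ] (M : SEM χ V) {X Y : χ}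
    (h : M.Influences X Y) : M.t X < M.t Y := by
  obtain ⟨hne, i, x₁, x₂, v₁, v₂, hiX, hiY, hs₁, hs₂, hneq⟩ := h
  by_contra hlt
  push_neg at hlt
  apply hneq
  have key : ∀ n, ∀ Z, M.t Z = n → M.t Z ≤ M.t X → Z ≠ X → v₁ Z = v₂ Z := by
    intro n
    induction n using Nat.strong_induction_on with
    | _ n ih =>
      intro Z hZn hZle hZne
      have h1 := hs₁ Z
      have h2 := hs₂ Z
      simp only [SEM.intervene, Function.update_of_ne hZne] at h1 h2
      rw [← h1, ← h2]
      cases hi : i Z with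
      | some c => simp [hi]
      | none =>
        simp only [hi, Option.getD_none]
        apply M.dep
        intro X' hX'
        have hX'le : M.t X' < M.t X := lt_of_lt_of_le hX' hZle
        exact ih (M.t X') (hZn ▸ hX') X' rfl (le_of_lt hX'le) (fun e => lt_irrefl _ (e ▸ hX'le))
  exact key (M.t Y) Y rfl hlt (Ne.symm hne)

/-- Soundness of acyclicity (Rec⁺): the influence relation has no cycles.
If `X 0 ⇝ X 1 ⇝ … ⇝ X (k-1)` then `X (k-1) ⇝ X 0` fails. -/
theorem recplus_sound {χ V : Type} [DecidableEq χ] (M : SEM χ V) (k : ℕ) (X : ℕ → χ)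
    (hchain : ∀ j, j + 1 < k → M.Influences (X j) (X (j+1))) :
    ¬ M.Influences (X (k-1)) (X 0) := by
  intro hinf
  have hmono : ∀ j, j ≤ k - 1 → M.t (X 0) ≤ M.t (X j) := by
    intro j hj
    induction j with
    | zero => exact le_refl _
    | succ m ihm =>
      have hm : m ≤ k - 1 := le_of_lt (Nat.lt_of_lt_of_le (Nat.lt_succ_self m) hj)
      have hmk : m + 1 < k := by omega
      exact le_trans (ihm hm) (le_of_lt (influences_t_lt M (hchain m hmk)))
  have := influences_t_lt M hinf
  have := hmono (k-1) (le_refl _)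
  omega
end

section
/- Reversibility is derivable semantically: in an SEM M, if under intervention α ∧ (W := w) the solution assigns Y = y, and under intervention α ∧ (Y := y) the solution assigns W = w, then under intervention α alone the solution assigns Y = y (where W, Y ∉ dom(α) and W ≠ Y). -/
/-- Reversibility is semantically sound: if under `α ∧ (W := w)` the
solution has `Y = y`, and under `α ∧ (Y := y)` the solution has `W = w`, then under
`α` alone the solution has `Y = y` (where `W ≠ Y` and `W, Y ∉ dom α`). -/
theorem reversibility_sound {χ : Type} [DecidableEq χ] (M : SEM χ Bool)
    (α : χ → Option Bool) (W Y : χ) (hWY : W ≠ Y)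
    (hW : α W = none) (hY : α Y = none) (w y : Bool)
    (v₁ : χ → Bool) (h₁ : (M.intervene (Function.update α W (some w))).IsSolution v₁)
    (h₁Y : v₁ Y = y)
    (v₂ : χ → Bool) (h₂ : (M.intervene (Function.update α Y (some y))).IsSolution v₂)
    (h₂W : v₂ W = w)
    (v : χ → Bool) (hv : (M.intervene α).IsSolution v) :
    v Y = y := by
  have e1W : v₁ W = w := by
    have := h₁ W; simpa [SEM.intervene, SEM.IsSolution] using this.symm
  have e2Y : v₂ Y = y := by
    have := h₂ Y; simpa [SEM.intervene, SEM.IsSolution] using this.symm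
  have h12 : ∀ X, v₁ X = v₂ X := by
    suffices h : ∀ n X, M.t X = n → v₁ X = v₂ X from fun X => h (M.t X) X rfl
    intro n
    induction n using Nat.strong_induction_on with
    | _ n ih =>
    intro X hn
    by_cases hXW : X = W
    · subst hXW; rw [e1W, h₂W]
    by_cases hXY : X = Y
    · subst hXY; rw [h₁Y, e2Y]
    · have e1 := h₁ X
      have e2 := h₂ X
      simp [SEM.intervene, Function.update_of_ne hXW, Function.update_of_ne hXY] at e1 e2
      rw [← e1, ← e2]
      cases hα : α X with
      | some b => simp [hα]
      | none =>
        simp [hα]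
        exact M.dep X v₁ v₂ (fun X' h' => ih (M.t X') (hn ▸ h') X' rfl)
  have hv1 : ∀ X, v X = v₁ X := by
    suffices h : ∀ n X, M.t X = n → v X = v₁ X from fun X => h (M.t X) X rfl
    intro n
    induction n using Nat.strong_induction_on with
    | _ n ih =>
    intro X hn
    have ihd : ∀ X', M.t X' < M.t X → v X' = v₁ X' :=
      fun X' h' => ih (M.t X') (hn ▸ h') X' rfl
    by_cases hXW : X = W
    · subst hXW
      have hvW : M.f X v = v X := by
        have := hv X; simpa [SEM.intervene, hW] using this
      have h2W' : M.f X v₂ = v₂ X := by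
        have := h₂ X
        simpa [SEM.intervene, Function.update_of_ne hWY, hW] using this
      have : M.f X v = M.f X v₂ :=
        M.dep X v v₂ (fun X' h' => (ihd X' h').trans (h12 X'))
      rw [← hvW, this, h2W', h₂W, e1W]
    by_cases hXY : X = Y
    · subst hXY
      have hvY : M.f X v = v X := by
        have := hv X; simpa [SEM.intervene, hY] using this
      have h1Y' : M.f X v₁ = v₁ X := by
        have := h₁ X
        simpa [SEM.intervene, Function.update_of_ne (Ne.symm hWY), hY] using this
      have : M.f X v = M.f X v₁ := M.dep X v v₁ ihd
      rw [← hvY, this, h1Y']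
    · have e0 := hv X
      have e1 := h₁ X
      simp [SEM.intervene, Function.update_of_ne hXW] at e0 e1
      rw [← e0, ← e1]
      cases hα : α X with
      | some b => simp [hα]
      | none =>
        simp [hα]
        exact M.dep X v v₁ ihd
  rw [hv1 Y, h₁Y]
end

section
/- From any maximal consistent assignment of counterfactual data one can build an SEM: let χ_φ = {X₁, …, X_n} be finitely many variables totally ordered by index, and suppose given, for each assignment a : {X₁,…,X_m} → {0,1} (0 ≤ m < n), a value g(a) ∈ {0,1} intended as the value of X_{m+1} when its predecessors take values a. Then there exists an SEM M with time map t(X_i) = i − 1 such that for every finite intervention α on a prefix-closed set and every X_{m+1} ∉ dom(α), if the solution v of α(M) restricted to X₁,…,X_m equals a, then v(X_{m+1}) = g(a). -/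
/-- From counterfactual data one can build an SEM: given distinct
variables `X 0, …, X (n-1)` and, for each `m < n`, a function `g m` giving the intended
value of `X m` from the values of its predecessors `X 0, …, X (m-1)`, there is an SEM
with time map `t (X i) = i` such that for every intervention `α` whose domain is a
prefix-closed subset of `{X 0, …, X (n-1)}` and every unintervened `X m`, the solution
`v` of `α(M)` satisfies `v (X m) = g m (v ∘ X restricted to predecessors)`. -/
theorem completeness_construction {χ : Type} [DecidableEq χ] (n : ℕ) (X : Fin n → χ)
    (hX : Function.Injective X)
    (g : (m : Fin n) → (Fin m.val → Bool) → Bool) :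
    ∃ M : SEM χ Bool, (∀ i : Fin n, M.t (X i) = i.val) ∧
      ∀ α : χ → Option Bool,
        (∀ Z, α Z ≠ none → ∃ i : Fin n, X i = Z) →
        (∀ i j : Fin n, j < i → α (X i) ≠ none → α (X j) ≠ none) →
        ∀ m : Fin n, α (X m) = none →
          ∀ v : χ → Bool, (M.intervene α).IsSolution v →
            v (X m) = g m (fun j : Fin m.val => v (X ⟨j.val, j.isLt.trans m.isLt⟩)) := by
 classical
  have hch : ∀ (i : Fin n) (h : ∃ j : Fin n, X j = X i), h.choose = i := by
    intro i h
    exact hX h.choose_spec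
  refine ⟨{ f := fun Z v => if h : ∃ i : Fin n, X i = Z then
              g h.choose (fun j => v (X ⟨j.val, j.isLt.trans h.choose.isLt⟩)) else false,
            t := fun Z => if h : ∃ i : Fin n, X i = Z then h.choose.val else 0,
            dep := ?_ }, ?_, ?_⟩
  · intro Z v v' hvv'
    by_cases h : ∃ i : Fin n, X i = Z
    · simp only [dif_pos h]
      congr 1
      funext j
      apply hvv'
      have hj : ∃ i : Fin n, X i = X ⟨j.val, j.isLt.trans h.choose.isLt⟩ :=
        ⟨⟨j.val, j.isLt.trans h.choose.isLt⟩, rfl⟩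
      simp only [dif_pos h, dif_pos hj, hch]
      exact j.isLt
    · simp only [dif_neg h]
  · intro i
    have h : ∃ j : Fin n, X j = X i := ⟨i, rfl⟩
    simp only [dif_pos h, hch]
  · intro α _ _ m hm v hv
    have h : ∃ j : Fin n, X j = X m := ⟨m, rfl⟩
    have := hv (X m)
    simp only [SEM.intervene, hm, Option.getD_none, dif_pos h] at this
    rw [← this]
    have hm' := hch m h
    congr 1 <;> rw [hm']
end

section
/- Influence extension construction: given an SEM M over a countable variable set χ, a finite set S ⊆ χ, and an acyclic relation R on S extending the influence relation of M restricted to S (consistent with the time order), one can construct an SEM M' over a larger countable variable set, agreeing with M on all interventions that only touch χ, such that for all X, Y ∈ S, M' ⊨ X ⇝ Y if and only if X R Y. Concretely: adding for each pair (X,Y) ∈ R a fresh switch variable Z_{X,Y} at time 0 with constant value 0, and modifying f_Y so that when exactly Z_{X,Y} is set to 1, Y copies X, realizes exactly the influences in R among S without creating new ones among S. -/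
section Aux

open Classical in
noncomputable def solOf {α : Type} (N : SEM α Bool) : α → Bool
  | Z => N.f Z (fun Z' => if _h : N.t Z' < N.t Z then solOf N Z' else false)
  termination_by Z => N.t Z

lemma solOf_isSolution {α : Type} (N : SEM α Bool) : N.IsSolution (solOf N) := by
  intro Z
  conv_rhs => rw [solOf]
  exact N.dep Z _ _ fun Z' h => by rw [dif_pos h]

open Classical in
noncomputable def purify {χ : Type} (M : SEM χ Bool) (R : χ → χ → Prop)
    (v : χ ⊕ χ × χ → Bool) : χ → Bool
  | Z =>
    if ∃ X, R X Z ∧ v (Sum.inr (X, Z)) = true then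
      M.f Z (fun Z' => if _h : M.t Z' < M.t Z then purify M R v Z' else false)
    else v (Sum.inl Z)
  termination_by Z => M.t Z

lemma purify_pos {χ : Type} (M : SEM χ Bool) (R : χ → χ → Prop)
    (v : χ ⊕ χ × χ → Bool) (Z : χ) (h : ∃ X, R X Z ∧ v (Sum.inr (X, Z)) = true) :
    purify M R v Z = M.f Z (purify M R v) := by
  rw [purify, if_pos h]
  exact M.dep Z _ _ fun Z' h' => by rw [dif_pos h']

lemma purify_neg {χ : Type} (M : SEM χ Bool) (R : χ → χ → Prop)
    (v : χ ⊕ χ × χ → Bool) (Z : χ) (h : ¬ ∃ X, R X Z ∧ v (Sum.inr (X, Z)) = true) :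
    purify M R v Z = v (Sum.inl Z) := by
  rw [purify, if_neg h]

lemma purify_congr {χ : Type} (M : SEM χ Bool) (R : χ → χ → Prop)
    (v v' : χ ⊕ χ × χ → Bool) (hr : ∀ p, v (Sum.inr p) = v' (Sum.inr p)) :
    ∀ (k : ℕ) (Z : χ), M.t Z ≤ k →
      (∀ X, M.t X ≤ k → v (Sum.inl X) = v' (Sum.inl X)) →
      purify M R v Z = purify M R v' Z := by
  intro k
  induction k using Nat.strong_induction_on with
  | _ k ih =>
    intro Z hZ hl
    rw [purify, purify]
    by_cases hc : ∃ X, R X Z ∧ v (Sum.inr (X, Z)) = true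
    · rw [if_pos hc, if_pos (by simpa [hr] using hc)]
      have heq : (fun Z' => if _h : M.t Z' < M.t Z then purify M R v Z' else false)
          = (fun Z' => if _h : M.t Z' < M.t Z then purify M R v' Z' else false) := by
        funext Z'
        by_cases h' : M.t Z' < M.t Z
        · rw [dif_pos h', dif_pos h']
          exact ih (M.t Z') (lt_of_lt_of_le h' hZ) Z' le_rfl
            (fun X hX => hl X (le_trans hX (le_of_lt (lt_of_lt_of_le h' hZ))))
        · rw [dif_neg h', dif_neg h']
      rw [heq]
    · rw [if_neg hc, if_neg (by simpa [hr] using hc), hl Z hZ]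

open Classical in
noncomputable def extSEM {χ : Type} [DecidableEq χ] (M : SEM χ Bool) (S : Finset χ)
    (R : χ → χ → Prop) : SEM (χ ⊕ χ × χ) Bool where
  f := fun W v =>
    match W with
    | Sum.inr _ => false
    | Sum.inl W =>
      if ∃ Z', R W Z' ∧ v (Sum.inr (W, Z')) = true then false
      else if ∃ X, R X W ∧ v (Sum.inr (X, W)) = true then
        decide (Odd ((S.filter fun X => R X W ∧ M.t X < M.t W ∧
          v (Sum.inr (X, W)) = true ∧ v (Sum.inl X) = true)).card)
      else M.f W (purify M R v)
  t := Sum.elim (fun Z => M.t Z + 1) fun _ => 0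
  dep := by
    intro W v v' h
    match W with
    | Sum.inr p => rfl
    | Sum.inl W =>
      have hr : ∀ p, v (Sum.inr p) = v' (Sum.inr p) := fun p => h (Sum.inr p) (Nat.succ_pos _)
      have hl : ∀ X, M.t X < M.t W → v (Sum.inl X) = v' (Sum.inl X) := fun X hX =>
        h (Sum.inl X) (Nat.succ_lt_succ hX)
      simp only
      have e1 : (∃ Z', R W Z' ∧ v (Sum.inr (W, Z')) = true) ↔
          (∃ Z', R W Z' ∧ v' (Sum.inr (W, Z')) = true) := by simp only [hr]
      have e2 : (∃ X, R X W ∧ v (Sum.inr (X, W)) = true) ↔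
          (∃ X, R X W ∧ v' (Sum.inr (X, W)) = true) := by simp only [hr]
      by_cases h1 : ∃ Z', R W Z' ∧ v (Sum.inr (W, Z')) = true
      · rw [if_pos h1, if_pos (e1.mp h1)]
      · rw [if_neg h1, if_neg (fun hc => h1 (e1.mpr hc))]
        by_cases h2 : ∃ X, R X W ∧ v (Sum.inr (X, W)) = true
        · rw [if_pos h2, if_pos (e2.mp h2)]
          have hf : (S.filter fun X => R X W ∧ M.t X < M.t W ∧
              v (Sum.inr (X, W)) = true ∧ v (Sum.inl X) = true)
              = (S.filter fun X => R X W ∧ M.t X < M.t W ∧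
              v' (Sum.inr (X, W)) = true ∧ v' (Sum.inl X) = true) := by
            apply Finset.filter_congr
            intro X _
            by_cases hRX : R X W
            · by_cases ht : M.t X < M.t W
              · simp [hRX, ht, hr, hl X ht]
              · simp [ht]
            · simp [hRX]
          rw [hf]
        · rw [if_neg h2, if_neg (fun hc => h2 (e2.mpr hc))]
          exact M.dep W _ _ fun Z hZ =>
            purify_congr M R v v' hr (M.t Z) Z le_rfl fun X hX => hl X (lt_of_le_of_lt hX hZ)

open Classical in
lemma extSEM_f_inl {χ : Type} [DecidableEq χ] (M : SEM χ Bool) (S : Finset χ)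
    (R : χ → χ → Prop) (W : χ) (v : χ ⊕ χ × χ → Bool) :
    (extSEM M S R).f (Sum.inl W) v =
      if ∃ Z', R W Z' ∧ v (Sum.inr (W, Z')) = true then false
      else if ∃ X, R X W ∧ v (Sum.inr (X, W)) = true then
        decide (Odd ((S.filter fun X => R X W ∧ M.t X < M.t W ∧
          v (Sum.inr (X, W)) = true ∧ v (Sum.inl X) = true)).card)
      else M.f W (purify M R v) := rfl

lemma extSEM_f_inr {χ : Type} [DecidableEq χ] (M : SEM χ Bool) (S : Finset χ)
    (R : χ → χ → Prop) (p : χ × χ) (v : χ ⊕ χ × χ → Bool) :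
    (extSEM M S R).f (Sum.inr p) v = false := rfl

end Aux

/-- Influence extension: given an SEM `M`, a finite set `S` of variables,
and a time-respecting relation `R` on `S` extending the influence relation of `M`
restricted to `S`, there is an SEM `M'` over the enlarged variable set `χ ⊕ χ × χ`
(adding a fresh switch variable for each pair) that agrees with `M` on all interventions
touching only `χ`, and whose influence relation among `S` is exactly `R`. -/
theorem influence_extension {χ : Type} [DecidableEq χ] [Countable χ] (M : SEM χ Bool)
    (S : Finset χ) (R : χ → χ → Prop)
    (hRt : ∀ X Y, R X Y → M.t X < M.t Y)
    (hRS : ∀ X Y, R X Y → X ∈ S ∧ Y ∈ S)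
    (hext : ∀ X Y, X ∈ S → Y ∈ S → M.Influences X Y → R X Y) :
    ∃ M' : SEM (χ ⊕ χ × χ) Bool,
      (∀ α : χ → Option Bool, ∀ v : (χ ⊕ χ × χ) → Bool,
        (M'.intervene (Sum.elim α (fun _ => none))).IsSolution v →
        (M.intervene α).IsSolution (fun Z => v (Sum.inl Z))) ∧
      (∀ X Y, X ∈ S → Y ∈ S →
        (M'.Influences (Sum.inl X) (Sum.inl Y) ↔ R X Y)) := by
  classical
  refine ⟨extSEM M S R, ?_, ?_⟩
  · -- agreement with M on interventions touching only χ
    intro α v hv Z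
    have hinr : ∀ p, v (Sum.inr p) = false := by
      intro p
      have h := hv (Sum.inr p)
      rw [← h]
      simp [SEM.intervene, extSEM_f_inr]
    have hpure : purify M R v = fun W => v (Sum.inl W) := by
      funext W
      exact purify_neg M R v W (by simp [hinr])
    have hf : (extSEM M S R).f (Sum.inl Z) v = M.f Z (fun W => v (Sum.inl W)) := by
      rw [extSEM_f_inl, if_neg (by simp [hinr]), if_neg (by simp [hinr]), hpure]
    have h := hv (Sum.inl Z)
    simp only [SEM.intervene, Sum.elim_inl, hf] at h
    exact h
  · intro X Y hXS hYS
    constructor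
    · -- influence in extSEM → R X Y
      rintro ⟨hne, i, a₁, a₂, v₁, v₂, hiX, hiY, h₁, h₂, hvne⟩
      have hXY : X ≠ Y := fun h => hne (by rw [h])
      classical
      -- switch values are the same in both solutions
      have hσ : ∀ (a : Bool) (v : χ ⊕ χ × χ → Bool),
          ((extSEM M S R).intervene (Function.update i (Sum.inl X) (some a))).IsSolution v →
          ∀ p, v (Sum.inr p) = (i (Sum.inr p)).getD false := by
        intro a v hs p
        have h := hs (Sum.inr p)
        rw [← h]
        simp [SEM.intervene, extSEM_f_inr, Function.update]
      have hσ₁ := hσ a₁ v₁ h₁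
      have hσ₂ := hσ a₂ v₂ h₂
      have hOutv : ∀ (v : χ ⊕ χ × χ → Bool),
          (∀ p, v (Sum.inr p) = (i (Sum.inr p)).getD false) → ∀ Z : χ,
          ((∃ Z', R Z Z' ∧ v (Sum.inr (Z, Z')) = true) ↔
            (∃ Z', R Z Z' ∧ (i (Sum.inr (Z, Z'))).getD false = true)) := by
        intro v hv Z
        simp only [hv]
      have hInv : ∀ (v : χ ⊕ χ × χ → Bool),
          (∀ p, v (Sum.inr p) = (i (Sum.inr p)).getD false) → ∀ Z : χ,
          ((∃ W, R W Z ∧ v (Sum.inr (W, Z)) = true) ↔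
            (∃ W, R W Z ∧ (i (Sum.inr (W, Z))).getD false = true)) := by
        intro v hv Z
        simp only [hv]
      have hpin : ∀ (a : Bool) (v : χ ⊕ χ × χ → Bool),
          ((extSEM M S R).intervene (Function.update i (Sum.inl X) (some a))).IsSolution v →
          ∀ Z c, i (Sum.inl Z) = some c → v (Sum.inl Z) = c := by
        intro a v hs Z c hZ
        have hZX : (Sum.inl Z : χ ⊕ χ × χ) ≠ Sum.inl X := by
          intro h; rw [h, hiX] at hZ; cases hZ
        have h := hs (Sum.inl Z)
        rw [← h]
        simp [SEM.intervene, Function.update_of_ne hZX, hZ]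
      have hvX₁ : v₁ (Sum.inl X) = a₁ := by
        have h := h₁ (Sum.inl X)
        rw [← h]
        simp [SEM.intervene, Function.update_self]
      have hvX₂ : v₂ (Sum.inl X) = a₂ := by
        have h := h₂ (Sum.inl X)
        rw [← h]
        simp [SEM.intervene, Function.update_self]
      have hfree : ∀ (a : Bool) (v : χ ⊕ χ × χ → Bool),
          ((extSEM M S R).intervene (Function.update i (Sum.inl X) (some a))).IsSolution v →
          ∀ Z, Z ≠ X → i (Sum.inl Z) = none →
          v (Sum.inl Z) = (extSEM M S R).f (Sum.inl Z) v := by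
        intro a v hs Z hZX hZ
        have h := hs (Sum.inl Z)
        rw [← h]
        simp [SEM.intervene, Function.update_of_ne (fun hh => hZX (Sum.inl.inj hh)), hZ]
      by_cases hOutY : ∃ Z', R Y Z' ∧ (i (Sum.inr (Y, Z'))).getD false = true
      · -- Y has an outgoing switch on: both solutions give false at Y, contradiction
        exfalso
        apply hvne
        rw [hfree a₁ v₁ h₁ Y (Ne.symm hXY) hiY, hfree a₂ v₂ h₂ Y (Ne.symm hXY) hiY,
          extSEM_f_inl, extSEM_f_inl,
          if_pos ((hOutv v₁ hσ₁ Y).mpr hOutY), if_pos ((hOutv v₂ hσ₂ Y).mpr hOutY)]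
      · by_cases hInY : ∃ W, R W Y ∧ (i (Sum.inr (W, Y))).getD false = true
        · -- Y is a switch target: only X's value can differ among the sources
          by_contra hRXY
          apply hvne
          have hWval : ∀ W, R W Y → (i (Sum.inr (W, Y))).getD false = true →
              v₁ (Sum.inl W) = v₂ (Sum.inl W) := by
            intro W hRW hσW
            have hWX : W ≠ X := fun h => hRXY (h ▸ hRW)
            cases hiW : i (Sum.inl W) with
            | some c => rw [hpin a₁ v₁ h₁ W c hiW, hpin a₂ v₂ h₂ W c hiW]
            | none =>
              rw [hfree a₁ v₁ h₁ W hWX hiW, hfree a₂ v₂ h₂ W hWX hiW,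
                extSEM_f_inl, extSEM_f_inl,
                if_pos ((hOutv v₁ hσ₁ W).mpr ⟨Y, hRW, hσW⟩),
                if_pos ((hOutv v₂ hσ₂ W).mpr ⟨Y, hRW, hσW⟩)]
          rw [hfree a₁ v₁ h₁ Y (Ne.symm hXY) hiY, hfree a₂ v₂ h₂ Y (Ne.symm hXY) hiY,
            extSEM_f_inl, extSEM_f_inl,
            if_neg (fun hc => hOutY ((hOutv v₁ hσ₁ Y).mp hc)),
            if_neg (fun hc => hOutY ((hOutv v₂ hσ₂ Y).mp hc)),
            if_pos ((hInv v₁ hσ₁ Y).mpr hInY), if_pos ((hInv v₂ hσ₂ Y).mpr hInY)]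
          have hfeq : (S.filter fun W => R W Y ∧ M.t W < M.t Y ∧
              v₁ (Sum.inr (W, Y)) = true ∧ v₁ (Sum.inl W) = true)
              = (S.filter fun W => R W Y ∧ M.t W < M.t Y ∧
              v₂ (Sum.inr (W, Y)) = true ∧ v₂ (Sum.inl W) = true) := by
            apply Finset.filter_congr
            intro W _
            simp only [hσ₁, hσ₂]
            constructor
            · rintro ⟨hw1, hw2, hw3, hw4⟩
              exact ⟨hw1, hw2, hw3, by rw [← hWval W hw1 hw3]; exact hw4⟩
            · rintro ⟨hw1, hw2, hw3, hw4⟩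
              exact ⟨hw1, hw2, hw3, by rw [hWval W hw1 hw3]; exact hw4⟩
          rw [hfeq]
        · -- Y follows its (purified) M equation
          have hYv₁ : v₁ (Sum.inl Y) = M.f Y (purify M R v₁) := by
            rw [hfree a₁ v₁ h₁ Y (Ne.symm hXY) hiY, extSEM_f_inl,
              if_neg (fun hc => hOutY ((hOutv v₁ hσ₁ Y).mp hc)),
              if_neg (fun hc => hInY ((hInv v₁ hσ₁ Y).mp hc))]
          have hYv₂ : v₂ (Sum.inl Y) = M.f Y (purify M R v₂) := by
            rw [hfree a₂ v₂ h₂ Y (Ne.symm hXY) hiY, extSEM_f_inl,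
              if_neg (fun hc => hOutY ((hOutv v₂ hσ₂ Y).mp hc)),
              if_neg (fun hc => hInY ((hInv v₂ hσ₂ Y).mp hc))]
          by_cases hInX : ∃ W, R W X ∧ (i (Sum.inr (W, X))).getD false = true
          · -- X is itself a switch target: the purified values agree, contradiction
            exfalso
            apply hvne
            have key : ∀ (k : ℕ) (Z : χ), M.t Z ≤ k → purify M R v₁ Z = purify M R v₂ Z := by
              intro k
              induction k using Nat.strong_induction_on with
              | _ k ih =>
                intro Z hZk
                rw [purify, purify]
                by_cases hIZ : ∃ W, R W Z ∧ (i (Sum.inr (W, Z))).getD false = true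
                · rw [if_pos ((hInv v₁ hσ₁ Z).mpr hIZ),
                    if_pos ((hInv v₂ hσ₂ Z).mpr hIZ)]
                  have heq : (fun Z' => if _h : M.t Z' < M.t Z then purify M R v₁ Z' else false)
                      = (fun Z' => if _h : M.t Z' < M.t Z then purify M R v₂ Z' else false) := by
                    funext Z'
                    by_cases h' : M.t Z' < M.t Z
                    · rw [dif_pos h', dif_pos h']
                      exact ih (M.t Z') (lt_of_lt_of_le h' hZk) Z' le_rfl
                    · rw [dif_neg h', dif_neg h']
                  rw [heq]
                · rw [if_neg (fun hc => hIZ ((hInv v₁ hσ₁ Z).mp hc)),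
                    if_neg (fun hc => hIZ ((hInv v₂ hσ₂ Z).mp hc))]
                  have hZX : Z ≠ X := fun h => hIZ (h ▸ hInX)
                  cases hiZ : i (Sum.inl Z) with
                  | some c => rw [hpin a₁ v₁ h₁ Z c hiZ, hpin a₂ v₂ h₂ Z c hiZ]
                  | none =>
                    rw [hfree a₁ v₁ h₁ Z hZX hiZ, hfree a₂ v₂ h₂ Z hZX hiZ,
                      extSEM_f_inl, extSEM_f_inl]
                    by_cases hOZ : ∃ Z', R Z Z' ∧ (i (Sum.inr (Z, Z'))).getD false = true
                    · rw [if_pos ((hOutv v₁ hσ₁ Z).mpr hOZ),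
                        if_pos ((hOutv v₂ hσ₂ Z).mpr hOZ)]
                    · rw [if_neg (fun hc => hOZ ((hOutv v₁ hσ₁ Z).mp hc)),
                        if_neg (fun hc => hOZ ((hOutv v₂ hσ₂ Z).mp hc)),
                        if_neg (fun hc => hIZ ((hInv v₁ hσ₁ Z).mp hc)),
                        if_neg (fun hc => hIZ ((hInv v₂ hσ₂ Z).mp hc))]
                      exact M.dep Z _ _ fun Z' hZ' =>
                        ih (M.t Z') (lt_of_lt_of_le hZ' hZk) Z' le_rfl
            rw [hYv₁, hYv₂]
            exact congrArg (M.f Y) (funext fun Z => key (M.t Z) Z le_rfl)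
          · -- main case: transfer to an influence in M
            apply hext X Y hXS hYS
            set j : χ → Option Bool := fun Z =>
              if Z = X then none
              else if ∃ W, R W Z ∧ (i (Sum.inr (W, Z))).getD false = true then none
              else if i (Sum.inl Z) = none then
                (if ∃ Z', R Z Z' ∧ (i (Sum.inr (Z, Z'))).getD false = true then some false else none)
              else i (Sum.inl Z) with hj
            have hjX : j X = none := by simp [hj]
            have hjY : j Y = none := by
              simp only [hj]
              rw [if_neg (Ne.symm hXY), if_neg hInY, if_pos hiY, if_neg hOutY]
            have hsolM : ∀ (a : Bool) (v : χ ⊕ χ × χ → Bool),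
                ((extSEM M S R).intervene (Function.update i (Sum.inl X) (some a))).IsSolution v →
                (∀ p, v (Sum.inr p) = (i (Sum.inr p)).getD false) →
                v (Sum.inl X) = a →
                (M.intervene (Function.update j X (some a))).IsSolution (purify M R v) := by
              intro a v hs hσv hvX Z
              show (Function.update j X (some a) Z).getD (M.f Z (purify M R v))
                = purify M R v Z
              by_cases hZX : Z = X
              · subst hZX
                rw [Function.update_self]
                rw [purify_neg M R v Z (fun hc => hInX ((hInv v hσv Z).mp hc))]
                simp [hvX]
              · rw [Function.update_of_ne hZX]
                by_cases hIZ : ∃ W, R W Z ∧ (i (Sum.inr (W, Z))).getD false = true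
                · have hjZ : j Z = none := by
                    simp only [hj]; rw [if_neg hZX, if_pos hIZ]
                  rw [hjZ, Option.getD_none,
                    purify_pos M R v Z ((hInv v hσv Z).mpr hIZ)]
                · rw [purify_neg M R v Z (fun hc => hIZ ((hInv v hσv Z).mp hc))]
                  cases hiZ : i (Sum.inl Z) with
                  | some c =>
                    have hjZ : j Z = some c := by
                      simp only [hj]; rw [if_neg hZX, if_neg hIZ, if_neg (by simp [hiZ]), hiZ]
                    rw [hjZ]
                    simp [hpin a v hs Z c hiZ]
                  | none =>
                    by_cases hOZ : ∃ Z', R Z Z' ∧ (i (Sum.inr (Z, Z'))).getD false = true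
                    · have hjZ : j Z = some false := by
                        simp only [hj]; rw [if_neg hZX, if_neg hIZ, if_pos hiZ, if_pos hOZ]
                      rw [hjZ]
                      rw [hfree a v hs Z hZX hiZ, extSEM_f_inl,
                        if_pos ((hOutv v hσv Z).mpr hOZ)]
                      rfl
                    · have hjZ : j Z = none := by
                        simp only [hj]; rw [if_neg hZX, if_neg hIZ, if_pos hiZ, if_neg hOZ]
                      rw [hjZ, Option.getD_none,
                        hfree a v hs Z hZX hiZ, extSEM_f_inl,
                        if_neg (fun hc => hOZ ((hOutv v hσv Z).mp hc)),
                        if_neg (fun hc => hIZ ((hInv v hσv Z).mp hc))]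
            refine ⟨hXY, j, a₁, a₂, purify M R v₁, purify M R v₂, hjX, hjY,
              hsolM a₁ v₁ h₁ hσ₁ hvX₁, hsolM a₂ v₂ h₂ hσ₂ hvX₂, ?_⟩
            rw [purify_neg M R v₁ Y (fun hc => hInY ((hInv v₁ hσ₁ Y).mp hc)),
              purify_neg M R v₂ Y (fun hc => hInY ((hInv v₂ hσ₂ Y).mp hc))]
            exact hvne
    · -- R X Y → influence in extSEM
      intro hR
      have hXY : X ≠ Y := fun h => absurd (hRt X Y hR) (h ▸ lt_irrefl _)
      classical
      set i : (χ ⊕ χ × χ) → Option Bool := fun W =>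
        match W with
        | Sum.inl Z => if Z = X ∨ Z = Y then none else some false
        | Sum.inr p => some (decide (p = (X, Y))) with hi
    -- key computation for each forced value x of X
      have key : ∀ x : Bool,
          ∃ v, ((extSEM M S R).intervene (Function.update i (Sum.inl X) (some x))).IsSolution v
             ∧ v (Sum.inl Y) = x := by
        intro x
        set N := (extSEM M S R).intervene (Function.update i (Sum.inl X) (some x)) with hN
        refine ⟨solOf N, solOf_isSolution N, ?_⟩
        have hsol := solOf_isSolution N
        set v := solOf N with hvdef
        have hvr : ∀ p, v (Sum.inr p) = decide (p = (X, Y)) := by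
          intro p
          have h := hsol (Sum.inr p)
          rw [← h]
          simp [hN, SEM.intervene, extSEM_f_inr, Function.update, hi]
        have hvX : v (Sum.inl X) = x := by
          have h := hsol (Sum.inl X)
          rw [← h]
          simp [hN, SEM.intervene, Function.update]
        have h := hsol (Sum.inl Y)
        rw [← h]
        have hupd : Function.update i (Sum.inl X) (some x) (Sum.inl Y) = none := by
          rw [Function.update_of_ne (fun hh => hXY (Sum.inl.inj hh).symm)]
          simp [hi]
        simp only [hN, SEM.intervene, hupd, Option.getD_none]
        rw [extSEM_f_inl]
        have hc1 : ¬ ∃ Z', R Y Z' ∧ v (Sum.inr (Y, Z')) = true := by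
          rintro ⟨Z', hRZ, hvz⟩
          rw [hvr] at hvz
          simp only [decide_eq_true_eq, Prod.mk.injEq] at hvz
          exact hXY hvz.1.symm
        have hc2 : ∃ W, R W Y ∧ v (Sum.inr (W, Y)) = true := ⟨X, hR, by rw [hvr]; simp⟩
        rw [if_neg hc1, if_pos hc2]
        have hfilter : (S.filter fun W => R W Y ∧ M.t W < M.t Y ∧
            v (Sum.inr (W, Y)) = true ∧ v (Sum.inl W) = true)
            = if x = true then {X} else (∅ : Finset χ) := by
          ext W
          simp only [Finset.mem_filter, hvr, decide_eq_true_eq, Prod.mk.injEq]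
          constructor
          · rintro ⟨hWS, hRW, ht, ⟨hWX, -⟩, hvW⟩
            subst hWX
            rw [hvX] at hvW
            simp [hvW]
          · intro hW
            cases hx : x with
            | false => rw [hx] at hW; simp at hW
            | true =>
              rw [hx] at hW
              simp only [if_true, Finset.mem_singleton] at hW
              rw [hW]
              exact ⟨hXS, hR, hRt X Y hR, ⟨rfl, True.intro⟩, by rw [hvX, hx]⟩
        rw [hfilter]
        cases x <;> simp
      obtain ⟨v₁, hs₁, hY₁⟩ := key true
      obtain ⟨v₂, hs₂, hY₂⟩ := key false
      refine ⟨fun h => hXY (Sum.inl.inj h), i, true, false, v₁, v₂, ?_, ?_, hs₁, hs₂, ?_⟩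
      · simp [hi]
      · simp [hi]
      · rw [hY₁, hY₂]; simp
end

section
/- Any SEM whose structural functions depend on finitely many earlier variables can be converted to an equivalent local SEM: given an SEM M with time map t where each f_Y depends on a finite set of variables of strictly smaller time, there exists a local SEM M' over an enlarged countable variable set (adding chain variables W_{X,s} copying X forward through times s) such that M' agrees with M on all counterfactual statements involving only the original variables: for every intervention α on original variables and every original variable X, the solutions of α(M) and α(M') agree at X. -/
/-- Localization: any SEM whose structural functions depend on finitely
many earlier variables can be converted into a local SEM over an enlarged variable set
`χ ⊕ χ × ℕ` (adding chain variables copying each variable forward through time) that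
agrees with the original on all counterfactuals over the original variables. -/
theorem localization {χ : Type} (M : SEM χ Bool)
    (hfd : ∀ Y, ∃ S : Finset χ, (∀ Z ∈ S, M.t Z < M.t Y) ∧
      ∀ v v', (∀ Z ∈ S, v Z = v' Z) → M.f Y v = M.f Y v') :
    ∃ M' : SEM (χ ⊕ χ × ℕ) Bool, M'.IsLocal ∧
      ∀ α : χ → Option Bool, ∀ v' : (χ ⊕ χ × ℕ) → Bool,
        (M'.intervene (Sum.elim α (fun _ => none))).IsSolution v' →
        ∀ v : χ → Bool, (M.intervene α).IsSolution v →
          ∀ X : χ, v' (Sum.inl X) = v X := by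
  classical
  -- the new structural functions
  set F : (χ ⊕ χ × ℕ) → ((χ ⊕ χ × ℕ) → Bool) → Bool := fun W v =>
    match W with
    | Sum.inl Y => M.f Y (fun Z =>
        if M.t Z + 1 = M.t Y then v (Sum.inl Z) else v (Sum.inr (Z, M.t Y - 1)))
    | Sum.inr (X, s) =>
        if s = M.t X + 1 then v (Sum.inl X)
        else if s = 0 then false else v (Sum.inr (X, s - 1)) with hF
  set T : (χ ⊕ χ × ℕ) → ℕ := Sum.elim M.t Prod.snd with hT
  have key : ∀ (Y : χ) (v v' : (χ ⊕ χ × ℕ) → Bool),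
      (∀ X', T X' + 1 = T (Sum.inl Y) → v X' = v' X') →
      F (Sum.inl Y) v = F (Sum.inl Y) v' := by
    intro Y v v' h
    obtain ⟨S, hS1, hS2⟩ := hfd Y
    simp only [hF]
    apply hS2
    intro Z hZ
    have hlt : M.t Z < M.t Y := hS1 Z hZ
    by_cases hc : M.t Z + 1 = M.t Y
    · simp only [hc, if_pos rfl]
      exact h (Sum.inl Z) hc
    · simp only [hc, if_neg hc]
      apply h (Sum.inr (Z, M.t Y - 1))
      simp only [hT, Sum.elim_inr, Sum.elim_inl]
      omega
  have keyr : ∀ (X : χ) (s : ℕ) (v v' : (χ ⊕ χ × ℕ) → Bool),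
      (∀ X', T X' + 1 = T (Sum.inr (X, s)) → v X' = v' X') →
      F (Sum.inr (X, s)) v = F (Sum.inr (X, s)) v' := by
    intro X s v v' h
    simp only [hF]
    by_cases h1 : s = M.t X + 1
    · simp only [h1, if_pos rfl]
      apply h (Sum.inl X)
      simp [hT, h1]
    · simp only [if_neg h1]
      by_cases h2 : s = 0
      · simp [h2]
      · simp only [if_neg h2]
        apply h (Sum.inr (X, s - 1))
        simp only [hT, Sum.elim_inr]
        omega
  refine ⟨⟨F, T, ?_⟩, ?_, ?_⟩
  · -- dep
    rintro (Y | ⟨X, s⟩) v v' h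
    · refine key Y v v' (fun X' hX' => h X' (by omega))
    · refine keyr X s v v' (fun X' hX' => h X' (by omega))
  · -- locality
    rintro (Y | ⟨X, s⟩) v v' h
    · exact key Y v v' h
    · exact keyr X s v v' h
  · -- counterfactual agreement
    intro α v' hsol' v hsol
    have heq : ∀ W, (Sum.elim α (fun _ => none) W).getD (F W v') = v' W := hsol'
    have heqr : ∀ (X : χ) (s : ℕ), F (Sum.inr (X, s)) v' = v' (Sum.inr (X, s)) := by
      intro X s
      have := heq (Sum.inr (X, s))
      simpa using this
    -- chain lemma
    have chain : ∀ s (X : χ), M.t X < s → v' (Sum.inr (X, s)) = v' (Sum.inl X) := by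
      intro s
      induction s with
      | zero => intro X h; omega
      | succ n ih =>
        intro X h
        rw [← heqr X (n + 1)]
        simp only [hF]
        by_cases hc : n + 1 = M.t X + 1
        · simp [hc]
        · have hn : M.t X < n := by omega
          simp only [if_neg hc, if_neg (Nat.succ_ne_zero n)]
          simpa using ih X hn
    have main : ∀ n (X : χ), M.t X < n → v' (Sum.inl X) = v X := by
      intro n
      induction n with
      | zero => intro X h; omega
      | succ n ih =>
        intro X hX
        have h1 := heq (Sum.inl X)
        have h2 := hsol X
        simp only [Sum.elim_inl] at h1
        simp only [SEM.intervene] at h2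
        cases hα : α X with
        | some b =>
          rw [hα] at h1 h2
          simp only [Option.getD_some] at h1 h2
          rw [← h1, ← h2]
        | none =>
          rw [hα] at h1 h2
          simp only [Option.getD_none] at h1 h2
          rw [← h1, ← h2]
          simp only [hF]
          obtain ⟨S, hS1, hS2⟩ := hfd X
          apply hS2
          intro Z hZ
          have hlt : M.t Z < M.t X := hS1 Z hZ
          by_cases hc : M.t Z + 1 = M.t X
          · simp only [if_pos hc]
            exact ih Z (by omega)
          · simp only [if_neg hc]
            rw [chain (M.t X - 1) Z (by omega)]
            exact ih Z (by omega)
    intro X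
    exact main (M.t X + 1) X (Nat.lt_succ_self _)
end
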